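/- arXiv:1608.04937 — 2 statements merged into one kernel-verified Lean document; each statement's English description precedes it below -/
import Mathlib

section
/- Equivalence of ensembles (sampling bound): fix M ≤ L and a finite multiset ξ = {x₁,…,x_L} of elements of a set S. Let (X₁,…,X_M) be a uniformly random ordered sample of size M drawn from ξ without replacement, and let (Y₁,…,Y_M) be drawn with replacement (i.i.d. uniform on ξ). Then for every bounded function g : S^M → ℝ, |E[g(X₁,…,X_M)] − E[g(Y₁,…,Y_M)]| ≤ 2·‖g‖_∞·(1 − L(L−1)···(L−M+1)/L^M). -/
theorem stmt5 {S : Type*} (L M : ℕ) (hM : 0 < M) (hML : M ≤ L)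
    (ξ : Fin L → S) (g : (Fin M → S) → ℝ) (C : ℝ) (hC : ∀ v, |g v| ≤ C) :
    |(∑ σ : Fin M ↪ Fin L, g (fun i => ξ (σ i))) / (Fintype.card (Fin M ↪ Fin L) : ℝ)
        - (∑ f : Fin M → Fin L, g (fun i => ξ (f i))) / (L : ℝ) ^ M|
      ≤ 2 * C * (1 - (Nat.descFactorial L M : ℝ) / (L : ℝ) ^ M) := by
  classical
  have hL : 0 < L := lt_of_lt_of_le hM hML
  have hC0 : 0 ≤ C := le_trans (abs_nonneg _) (hC (fun _ => ξ ⟨0, hL⟩))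
  set Nn : ℕ := Nat.descFactorial L M with hNn
  have hNpos : 0 < Nn := Nat.pos_of_ne_zero (fun h =>
    absurd (Nat.descFactorial_eq_zero_iff_lt.mp h) (not_lt.mpr hML))
  have hcard : Fintype.card (Fin M ↪ Fin L) = Nn := by
    simp [Fintype.card_embedding_eq, hNn]
  have hNle : Nn ≤ L ^ M := Nat.descFactorial_le_pow L M
  -- sum over embeddings equals sum over injective functions
  have hsum_inj : (∑ σ : Fin M ↪ Fin L, g (fun i => ξ (σ i)))
      = ∑ f ∈ Finset.univ.filter (fun f : Fin M → Fin L => Function.Injective f),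
          g (fun i => ξ (f i)) := by
    rw [Finset.sum_subtype (p := fun f : Fin M → Fin L => Function.Injective f)
        (Finset.univ.filter (fun f : Fin M → Fin L => Function.Injective f))
        (by simp) (fun f => g (fun i => ξ (f i)))]
    exact (Equiv.sum_comp (Equiv.subtypeInjectiveEquivEmbedding (Fin M) (Fin L))
      (fun σ : Fin M ↪ Fin L => g (fun i => ξ (σ i)))).symm
  have hcard_filter : (Finset.univ.filter
      (fun f : Fin M → Fin L => Function.Injective f)).card = Nn := by
    rw [← Fintype.card_subtype]
    rw [Fintype.card_congr (Equiv.subtypeInjectiveEquivEmbedding (Fin M) (Fin L))]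
    exact hcard
  have hcard_filter_not : (Finset.univ.filter
      (fun f : Fin M → Fin L => ¬ Function.Injective f)).card = L ^ M - Nn := by
    have h := Finset.card_filter_add_card_filter_not
      (s := (Finset.univ : Finset (Fin M → Fin L)))
      (p := fun f : Fin M → Fin L => Function.Injective f)
    rw [hcard_filter] at h
    simp only [Finset.card_univ, Fintype.card_fun, Fintype.card_fin] at h
    omega
  set T : ℝ := ∑ σ : Fin M ↪ Fin L, g (fun i => ξ (σ i)) with hT
  set R : ℝ := ∑ f ∈ Finset.univ.filter
      (fun f : Fin M → Fin L => ¬ Function.Injective f), g (fun i => ξ (f i)) with hR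
  have hsplit : (∑ f : Fin M → Fin L, g (fun i => ξ (f i))) = T + R := by
    rw [hsum_inj]
    exact (Finset.sum_filter_add_sum_filter_not _ _ _).symm
  set n : ℝ := (Nn : ℝ) with hn
  set K : ℝ := (L : ℝ) ^ M with hKdef
  have hnpos : 0 < n := by rw [hn]; exact_mod_cast hNpos
  have hKpos : 0 < K := by positivity
  have hnK : n ≤ K := by
    rw [hn, hKdef]
    exact_mod_cast hNle
  have hTbound : |T| ≤ n * C := by
    calc |T| ≤ ∑ σ : Fin M ↪ Fin L, |g (fun i => ξ (σ i))| :=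
          Finset.abs_sum_le_sum_abs _ _
      _ ≤ ∑ _σ : Fin M ↪ Fin L, C := Finset.sum_le_sum (fun σ _ => hC _)
      _ = n * C := by
          rw [Finset.sum_const, Finset.card_univ, hcard, nsmul_eq_mul, hn]
  have hRbound : |R| ≤ (K - n) * C := by
    have hcast : ((L ^ M - Nn : ℕ) : ℝ) = K - n := by
      rw [Nat.cast_sub hNle]; push_cast [hKdef, hn]; ring
    calc |R| ≤ ∑ f ∈ Finset.univ.filter
          (fun f : Fin M → Fin L => ¬ Function.Injective f), |g (fun i => ξ (f i))| :=
          Finset.abs_sum_le_sum_abs _ _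
      _ ≤ ∑ _f ∈ Finset.univ.filter
          (fun f : Fin M → Fin L => ¬ Function.Injective f), C :=
          Finset.sum_le_sum (fun f _ => hC _)
      _ = (K - n) * C := by
          rw [Finset.sum_const, hcard_filter_not, nsmul_eq_mul, hcast]
  rw [hcard, hsplit]
  have hkey : T / n - (T + R) / K = (T / n) * ((K - n) / K) - R / K := by
    field_simp
    ring
  have h1n : 1 - n / K = (K - n) / K := by field_simp
  rw [hkey, h1n]
  have hTn : |T / n| ≤ C := by
    rw [abs_div, abs_of_pos hnpos, div_le_iff₀ hnpos]
    linarith [hTbound]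
  have hfrac : 0 ≤ (K - n) / K := div_nonneg (by linarith) hKpos.le
  calc |T / n * ((K - n) / K) - R / K|
      ≤ |T / n * ((K - n) / K)| + |R / K| := abs_sub _ _
    _ = |T / n| * ((K - n) / K) + |R| / K := by
        rw [abs_mul, abs_of_nonneg hfrac]
        congr 1
        rw [abs_div, abs_of_pos hKpos]
    _ ≤ C * ((K - n) / K) + ((K - n) * C) / K := by
        gcongr
    _ = 2 * C * ((K - n) / K) := by ring
end

section
/- Calculus estimate in the Garsia–Rodemich–Rumsey argument: for every 0 < δ < e^{-2} and every I ≥ 0, ∫₀^δ log(1 + 4I/u²) · du/(2√u) ≤ √δ·( −4·log δ·log(δ² + 4I + 1) − 4·log δ ). -/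
/-!
For `0 < u ≤ δ`, `log (1 + 4I/u²) = log (u² + 4I) - 2 log u ≤ L - 2 log u` with
`L = log (δ² + 4I + 1)`, and `(L - 2 log u) / (2√u)` has the explicit antiderivative
`(L + 4)√u - 2√u log u`, which vanishes at `0`. This gives the bound `√δ (L + 4 - 2 log δ)`,
and `log δ < -2` turns it into the stated one.
-/

open MeasureTheory Set Real

lemma continuous_sqrt_mul_log : Continuous fun x : ℝ => √x * log x := by
  have h : (fun x : ℝ => √x * log x) = fun x => 2 * (√x * log √x) := by
    funext x
    rcases le_or_gt 0 x with hx | hx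
    · rw [log_sqrt hx]; ring
    · simp [sqrt_eq_zero_of_nonpos hx.le]
  rw [h]
  exact (continuous_sqrt.mul_log).const_mul 2

lemma hasDerivAt_sqrt_mul_sub_log (c : ℝ) {x : ℝ} (hx : x ≠ 0) :
    HasDerivAt (fun u => (c + 4) * √u - 2 * (√u * log u)) ((c - 2 * log x) / (2 * √x)) x := by
  refine (((hasDerivAt_sqrt hx).const_mul (c + 4)).sub
    ((hasDerivAt_sqrt_mul_log hx).const_mul 2)).congr_deriv ?_
  field_simp
  ring

lemma continuous_sqrt_mul_sub_log (c : ℝ) :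
    Continuous fun u : ℝ => (c + 4) * √u - 2 * (√u * log u) :=
  (continuous_sqrt.const_mul _).sub (continuous_sqrt_mul_log.const_mul 2)

section IntegralOfLogDivSqrt

variable {c δ : ℝ}

lemma sub_log_div_sqrt_nonneg (hc : 2 * log δ ≤ c) {u : ℝ} (hu : u ∈ Ioc 0 δ) :
    0 ≤ (c - 2 * log u) / (2 * √u) := by
  have := log_le_log hu.1 hu.2
  exact div_nonneg (by linarith) (by positivity)

lemma integrableOn_sub_log_div_sqrt (hc : 2 * log δ ≤ c) :
    IntegrableOn (fun u => (c - 2 * log u) / (2 * √u)) (Ioc 0 δ) :=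
  intervalIntegral.integrableOn_deriv_of_nonneg (continuous_sqrt_mul_sub_log c).continuousOn
    (fun _ hx => hasDerivAt_sqrt_mul_sub_log c hx.1.ne')
    (fun _ hx => sub_log_div_sqrt_nonneg hc (Ioo_subset_Ioc_self hx))

lemma integral_sub_log_div_sqrt (hδ : 0 < δ) (hc : 2 * log δ ≤ c) :
    ∫ u in Ioc 0 δ, (c - 2 * log u) / (2 * √u) = √δ * (c + 4 - 2 * log δ) := by
  rw [← intervalIntegral.integral_of_le hδ.le,
    intervalIntegral.integral_eq_sub_of_hasDerivAt_of_le hδ.le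
      (continuous_sqrt_mul_sub_log c).continuousOn
      (fun _ hx => hasDerivAt_sqrt_mul_sub_log c hx.1.ne')
      ((intervalIntegrable_iff_integrableOn_Ioc_of_le hδ.le).2
        (integrableOn_sub_log_div_sqrt hc))]
  simp only [sqrt_zero, mul_zero, zero_mul, sub_zero]
  ring

end IntegralOfLogDivSqrt

lemma log_one_add_div_sq_le {a u δ : ℝ} (ha : 0 ≤ a) (hu : 0 < u) (huδ : u ≤ δ) :
    log (1 + a / u ^ 2) ≤ log (δ ^ 2 + a + 1) - 2 * log u := by
  have hsplit : 1 + a / u ^ 2 = (u ^ 2 + a) / u ^ 2 := by field_simp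
  rw [hsplit, log_div (by positivity) (by positivity), log_pow, Nat.cast_ofNat]
  have : log (u ^ 2 + a) ≤ log (δ ^ 2 + a + 1) :=
    log_le_log (by positivity) (by nlinarith)
  linarith

theorem stmt19 (δ I : ℝ) (hδ0 : 0 < δ) (hδ : δ < Real.exp (-2)) (hI : 0 ≤ I) :
    ∫ u in Set.Ioc (0 : ℝ) δ, Real.log (1 + 4 * I / u ^ 2) / (2 * Real.sqrt u)
      ≤ Real.sqrt δ *
        (-(4 : ℝ) * Real.log δ * Real.log (δ ^ 2 + 4 * I + 1) - 4 * Real.log δ) := by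
  set L := log (δ ^ 2 + 4 * I + 1)
  have hL : 0 ≤ L := log_nonneg (by nlinarith)
  have hlogδ : log δ < -2 := by simpa using log_lt_log hδ0 hδ
  have hc : 2 * log δ ≤ L := by linarith
  calc ∫ u in Ioc 0 δ, log (1 + 4 * I / u ^ 2) / (2 * √u)
      ≤ ∫ u in Ioc 0 δ, (L - 2 * log u) / (2 * √u) := by
        refine integral_mono_of_nonneg ?_ (integrableOn_sub_log_div_sqrt hc) ?_ <;>
          filter_upwards [ae_restrict_mem measurableSet_Ioc] with u hu
        · exact div_nonneg (log_nonneg (le_add_of_nonneg_right (by positivity))) (by positivity)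
        · exact div_le_div_of_nonneg_right
            (log_one_add_div_sq_le (by positivity) hu.1 hu.2) (by positivity)
    _ = √δ * (L + 4 - 2 * log δ) := integral_sub_log_div_sqrt hδ0 hc
    _ ≤ √δ * (-4 * log δ * L - 4 * log δ) := by
        refine mul_le_mul_of_nonneg_left ?_ (sqrt_nonneg δ)
        nlinarith [mul_nonneg hL (show 0 ≤ -4 * log δ - 1 by linarith)]
end
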